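/- Inverse of a twist: let R ∈ End(V⊗V) be an invertible solution of the Yang–Baxter equation and (F, G) a twisting pair for R with twisted matrix R̃ = τ(F)⁻¹ R F. Then (F⁻¹, G⁻¹) is a twisting pair for R̃, and the twist of R̃ by (F⁻¹, G⁻¹) recovers R. -/

import Mathlib

open TensorProduct

noncomputable section
variable (k V : Type*) [Field k] [AddCommGroup V] [Module k V]

/-- The flip `P : V ⊗ V → V ⊗ V`. -/
def flipE : Module.End k (V ⊗[k] V) := (TensorProduct.comm k V V).toLinearMap

/-- `τ(X) = P X P`. -/
def tauE (X : Module.End k (V ⊗[k] V)) : Module.End k (V ⊗[k] V) :=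
  flipE k V * X * flipE k V

/-- The embedding `X ↦ X₂₃` into `End(V ⊗ V ⊗ V)`. -/
def leg23 (X : Module.End k (V ⊗[k] V)) : Module.End k (V ⊗[k] (V ⊗[k] V)) :=
  LinearMap.lTensor V X

/-- The embedding `X ↦ X₁₂` into `End(V ⊗ V ⊗ V)`. -/
def leg12 (X : Module.End k (V ⊗[k] V)) : Module.End k (V ⊗[k] (V ⊗[k] V)) :=
  (TensorProduct.assoc k V V V).toLinearMap ∘ₗ LinearMap.rTensor V X ∘ₗ
    (TensorProduct.assoc k V V V).symm.toLinearMap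

/-- The flip of factors 1 and 2. -/
def P12 : Module.End k (V ⊗[k] (V ⊗[k] V)) := leg12 k V (flipE k V)

/-- The flip of factors 2 and 3. -/
def P23 : Module.End k (V ⊗[k] (V ⊗[k] V)) := leg23 k V (flipE k V)

/-- The embedding `X ↦ X₁₃`. -/
def leg13 (X : Module.End k (V ⊗[k] V)) : Module.End k (V ⊗[k] (V ⊗[k] V)) :=
  P23 k V * leg12 k V X * P23 k V

/-- The Yang–Baxter equation `R₁₂R₁₃R₂₃ = R₂₃R₁₃R₁₂`. -/
def YB (R : Module.End k (V ⊗[k] V)) : Prop :=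
  leg12 k V R * leg13 k V R * leg23 k V R = leg23 k V R * leg13 k V R * leg12 k V R

/-- `(F, G)` (with given two-sided inverses `F'`, `G'`) is a *twisting pair* for `R`:
`Φ := G F₁₂⁻¹` and `Ψ := G F₂₃⁻¹` satisfy `R₁₂ Φ = Φ^{(213)} R₁₂` and
`R₂₃ Ψ = Ψ^{(132)} R₂₃`. -/
def TwistingPair (R F F' : Module.End k (V ⊗[k] V))
    (G G' : Module.End k (V ⊗[k] (V ⊗[k] V))) : Prop :=
  F * F' = 1 ∧ F' * F = 1 ∧ G * G' = 1 ∧ G' * G = 1 ∧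
  leg12 k V R * (G * leg12 k V F') =
    (P12 k V * (G * leg12 k V F') * P12 k V) * leg12 k V R ∧
  leg23 k V R * (G * leg23 k V F') =
    (P23 k V * (G * leg23 k V F') * P23 k V) * leg23 k V R

/-!
Write `Φ = G F₁₂⁻¹`. The candidate pair `(F⁻¹, G⁻¹)` has `Φ̃ = G⁻¹ F₁₂ = F₁₂⁻¹ Φ⁻¹ F₁₂`, so the
relation for `Φ̃` and `R̃₁₂ = P₁₂ F₁₂⁻¹ P₁₂ R₁₂ F₁₂` is the relation for `Φ` inverted and then
conjugated by `F₁₂`. This is an identity in any monoid with an involution `P`, and it transports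
to both legs because `X ↦ X₁₂` and `X ↦ X₂₃` are monoid homomorphisms sending `P` to `P₁₂`, `P₂₃`.
-/

section Monoid

variable {M : Type*} [Monoid M] {P : M}

theorem SemiconjBy.conj_units_inv (hP : P * P = 1) {L : M} {X : Mˣ}
    (h : SemiconjBy L X (P * X * P)) : SemiconjBy L ↑X⁻¹ (P * ↑X⁻¹ * P) := by
  let p : Mˣ := ⟨P, P, hP, hP⟩
  convert SemiconjBy.units_inv_right (x := X) (y := p * X * p) h using 1
  simp [p, mul_assoc]

theorem SemiconjBy.twist (hP : P * P = 1) {L : M} (A G : Mˣ)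
    (h : SemiconjBy L (G * ↑A⁻¹) (P * (G * ↑A⁻¹) * P)) :
    SemiconjBy (P * ↑A⁻¹ * P * L * A) (↑G⁻¹ * A) (P * (↑G⁻¹ * A) * P) := by
  have hinv : SemiconjBy L (A * ↑G⁻¹) (P * (A * ↑G⁻¹) * P) := by
    simpa using h.conj_units_inv hP (X := G * A⁻¹)
  have hP' (x : M) : P * (P * x) = x := by rw [← mul_assoc, hP, one_mul]
  calc P * ↑A⁻¹ * P * L * A * (↑G⁻¹ * A) = P * ↑A⁻¹ * P * (L * (A * ↑G⁻¹)) * A := by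
        simp only [mul_assoc]
    _ = P * (↑G⁻¹ * A) * P * (P * ↑A⁻¹ * P * L * A) := by
        rw [hinv.eq]
        simp only [mul_assoc, hP', Units.inv_mul_cancel_left, Units.mul_inv_cancel_left]

theorem SemiconjBy.map_twist {N : Type*} [Monoid N] (φ : N →* M) {Q : N} (hQ : Q * Q = 1)
    (R : N) (F : Nˣ) (G : Mˣ)
    (h : SemiconjBy (φ R) (G * φ ↑F⁻¹) (φ Q * (G * φ ↑F⁻¹) * φ Q)) :
    SemiconjBy (φ (Q * ↑F⁻¹ * Q * R * F)) (↑G⁻¹ * φ F) (φ Q * (↑G⁻¹ * φ F) * φ Q) := by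
  have hφQ : φ Q * φ Q = 1 := by rw [← map_mul, hQ, map_one]
  simpa only [map_mul, Units.coe_map, Units.coe_map_inv] using
    SemiconjBy.twist hφQ (Units.map φ F) G h

theorem conj_mul_twist_mul_inv (hP : P * P = 1) (F : Mˣ) (R : M) :
    P * F * P * (P * ↑F⁻¹ * P * R * F) * ↑F⁻¹ = R := by
  have hP' (x : M) : P * (P * x) = x := by rw [← mul_assoc, hP, one_mul]
  simp only [mul_assoc, hP', Units.mul_inv_cancel_left, Units.mul_inv, mul_one]

end Monoid

theorem flipE_mul_self : flipE k V * flipE k V = 1 := by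
  ext x y
  simp [flipE]

def leg12Hom : Module.End k (V ⊗[k] V) →* Module.End k (V ⊗[k] (V ⊗[k] V)) where
  toFun := leg12 k V
  map_one' := by
    ext x y z
    simp [leg12]
  map_mul' X Y := by
    ext x y z
    simp [leg12, Module.End.mul_apply]

def leg23Hom : Module.End k (V ⊗[k] V) →* Module.End k (V ⊗[k] (V ⊗[k] V)) where
  toFun := leg23 k V
  map_one' := LinearMap.lTensor_id V _
  map_mul' := LinearMap.lTensor_mul V

theorem twistingPair_inv
    (R F F' : Module.End k (V ⊗[k] V))
    (G G' : Module.End k (V ⊗[k] (V ⊗[k] V)))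
    (hTP : TwistingPair k V R F F' G G') :
    TwistingPair k V (tauE k V F' * R * F) F' F G' G ∧
    tauE k V F * (tauE k V F' * R * F) * F' = R := by
  obtain ⟨hFF', hF'F, hGG', hG'G, h12, h23⟩ := hTP
  let Fu : (Module.End k (V ⊗[k] V))ˣ := ⟨F, F', hFF', hF'F⟩
  let Gu : (Module.End k (V ⊗[k] (V ⊗[k] V)))ˣ := ⟨G, G', hGG', hG'G⟩
  refine ⟨⟨hF'F, hFF', hG'G, hGG', ?_, ?_⟩, conj_mul_twist_mul_inv (flipE_mul_self k V) Fu R⟩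
  · exact SemiconjBy.map_twist (leg12Hom k V) (flipE_mul_self k V) R Fu Gu h12
  · exact SemiconjBy.map_twist (leg23Hom k V) (flipE_mul_self k V) R Fu Gu h23
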